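/- arXiv:2009.10935 — 2 statements merged into one kernel-verified Lean document; each statement's English description precedes it below -/
import Mathlib

section
/- With the notation of the preceding statement (a_j the recurrence, b = -2(Λ/(2m+1) - ulΛ/(2m+2)) a_m), the function λ₀ satisfies the second-order linear ODE λ₀'' + 2(2m+1) tan φ · λ₀' + (−4m(m+1) + 2(m+1)(2m+1) sec² φ) λ₀ = 2(m+1)Λ sec² φ − 2m·ulΛ on (-π/2, π/2). -/
/-!
Write `L` for the linear operator
`f ↦ f'' + 2(2m+1) tan φ f' + (-4m(m+1) + 2(m+1)(2m+1) sec²φ) f`. On powers of `cos` it acts by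
`L[cosⁿ] = ((n-2m-1)(n-2m-2) sec²φ - (n-2m)(n-2m-2)) cosⁿ` and
`L[cosⁿ sin] = ((n-2m-1)(n-2m-2) sec²φ - (n-2m+1)(n-2m-1)) cosⁿ sin`,
so `cos^(2m+2)` and `cos^(2m+1) sin` solve the homogeneous equation. The recurrence for `a_j` is
exactly what makes `∑ a_j L[cos^(2j)]` telescope to its `j = 0` boundary term
`(2m+1)(2m+2) sec²φ`; adding `L[1]` times the constant term of `λ₀` gives the right-hand side.
-/

open Real

/-- The sequence `a₀ = 1`, `a_j = ((2m - 2j + 4)/(2m - 2j + 1)) a_{j-1}`. -/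
noncomputable def aSeq (m : ℕ) : ℕ → ℝ
  | 0 => 1
  | j + 1 => ((2 * (m : ℝ) - 2 * ((j : ℝ) + 1) + 4) / (2 * (m : ℝ) - 2 * ((j : ℝ) + 1) + 1))
      * aSeq m j

/-- `λ₀(φ) = ulΛ/(2m+2) + (Λ/(2m+1) − ulΛ/(2m+2))(Σ_{j=0}^m a_j cos^{2j}φ − 2 a_m cos^{2m+2}φ)
  + c cos^{2m+1}φ sin φ`. -/
noncomputable def lam0 (m : ℕ) (Λ ulΛ c : ℝ) (φ : ℝ) : ℝ :=
  ulΛ / (2 * (m : ℝ) + 2)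
    + (Λ / (2 * (m : ℝ) + 1) - ulΛ / (2 * (m : ℝ) + 2)) *
        ((∑ j ∈ Finset.range (m + 1), aSeq m j * Real.cos φ ^ (2 * j))
          - 2 * aSeq m m * Real.cos φ ^ (2 * m + 2))
    + c * Real.cos φ ^ (2 * m + 1) * Real.sin φ

open Filter Topology

noncomputable def odeCoeff (m : ℕ) (φ : ℝ) : ℝ :=
  -(4 * (m : ℝ) * ((m : ℝ) + 1)) + 2 * ((m : ℝ) + 1) * (2 * (m : ℝ) + 1) * (1 / cos φ) ^ 2

noncomputable def odeOp (m : ℕ) (f : ℝ → ℝ) (φ : ℝ) : ℝ :=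
  deriv (deriv f) φ + 2 * (2 * (m : ℝ) + 1) * tan φ * deriv f φ + odeCoeff m φ * f φ

-- Stated with `tan` so that no truncated exponent `n - 1` appears.
lemma hasDerivAt_cos_pow (n : ℕ) {x : ℝ} (hx : cos x ≠ 0) :
    HasDerivAt (fun y => cos y ^ n) (-(n * cos x ^ n * tan x)) x := by
  refine ((hasDerivAt_cos x).pow n).congr_deriv ?_
  rw [tan_eq_sin_div_cos]
  cases n with
  | zero => simp
  | succ n => rw [Nat.add_sub_cancel]; field_simp; ring

lemma aSeq_succ (m j : ℕ) :
    (2 * (m : ℝ) - 2 * j - 1) * aSeq m (j + 1) = (2 * (m : ℝ) - 2 * j + 2) * aSeq m j := by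
  have hodd : 2 * (m : ℝ) - 2 * j - 1 ≠ 0 := by
    rw [show 2 * (m : ℝ) - 2 * j - 1 = ((2 * (m : ℤ) - 2 * j - 1 : ℤ) : ℝ) by
      push_cast; ring]
    exact_mod_cast (by omega : 2 * (m : ℤ) - 2 * j - 1 ≠ 0)
  rw [aSeq, show 2 * (m : ℝ) - 2 * ((j : ℝ) + 1) + 1 = 2 * m - 2 * j - 1 by ring, ← mul_assoc,
    mul_div_cancel₀ _ hodd]
  ring

section odeOp

variable {m : ℕ} {φ : ℝ}

lemma odeOp_of_hasDerivAt {f f' : ℝ → ℝ} {f'' : ℝ}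
    (hf : ∀ᶠ x in 𝓝 φ, HasDerivAt f (f' x) x) (hf' : HasDerivAt f' f'' φ) :
    odeOp m f φ = f'' + 2 * (2 * (m : ℝ) + 1) * tan φ * f' φ + odeCoeff m φ * f φ := by
  have hd : deriv f =ᶠ[𝓝 φ] f' := hf.mono fun x hx => hx.deriv
  rw [odeOp, hd.deriv_eq, hf'.deriv, hd.eq_of_nhds]

lemma odeOp_const (a : ℝ) : odeOp m (fun _ => a) φ = odeCoeff m φ * a := by
  rw [odeOp_of_hasDerivAt (.of_forall fun x => hasDerivAt_const x a) (hasDerivAt_const φ 0)]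
  ring

lemma odeOp_const_mul (a : ℝ) (f : ℝ → ℝ) :
    odeOp m (fun x => a * f x) φ = a * odeOp m f φ := by
  rw [odeOp, odeOp, deriv_const_mul_field', deriv_const_mul_field]
  ring

lemma odeOp_add {f g : ℝ → ℝ} (hf : ContDiff ℝ 2 f) (hg : ContDiff ℝ 2 g) :
    odeOp m (fun x => f x + g x) φ = odeOp m f φ + odeOp m g φ := by
  have hd : deriv (fun x => f x + g x) = fun x => deriv f x + deriv g x :=
    funext fun x =>
      deriv_fun_add (hf.differentiable two_ne_zero x) (hg.differentiable two_ne_zero x)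
  rw [odeOp, odeOp, odeOp, hd, deriv_fun_add hf.differentiable_deriv_two.differentiableAt
    hg.differentiable_deriv_two.differentiableAt]
  ring

lemma odeOp_sum {ι : Type*} (s : Finset ι) {f : ι → ℝ → ℝ}
    (hf : ∀ i ∈ s, ContDiff ℝ 2 (f i)) :
    odeOp m (fun x => ∑ i ∈ s, f i x) φ = ∑ i ∈ s, odeOp m (f i) φ := by
  have hd : deriv (fun x => ∑ i ∈ s, f i x) = fun x => ∑ i ∈ s, deriv (f i) x :=
    funext fun x => deriv_fun_sum fun i hi => (hf i hi).differentiable two_ne_zero x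
  rw [odeOp, hd, deriv_fun_sum fun i hi => (hf i hi).differentiable_deriv_two.differentiableAt]
  simp only [odeOp, Finset.sum_add_distrib, Finset.mul_sum]

lemma odeOp_cos_pow (n : ℕ) (hφ : cos φ ≠ 0) :
    odeOp m (fun x => cos x ^ n) φ =
      (((n : ℝ) - 2 * m - 1) * (n - 2 * m - 2) * (1 / cos φ) ^ 2
        - (n - 2 * m) * (n - 2 * m - 2)) * cos φ ^ n := by
  have hnear : ∀ᶠ x in 𝓝 φ, cos x ≠ 0 := continuous_cos.continuousAt.eventually_ne hφ
  rw [odeOp_of_hasDerivAt (hnear.mono fun x hx => hasDerivAt_cos_pow n hx)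
    ((((hasDerivAt_cos_pow n hφ).const_mul (n : ℝ)).mul (hasDerivAt_tan hφ)).neg),
    odeCoeff, tan_eq_sin_div_cos]
  field_simp
  linear_combination ((n : ℝ) ^ 2 - 2 * n - 4 * n * m) * sin_sq_add_cos_sq φ

lemma odeOp_cos_pow_mul_sin (n : ℕ) (hφ : cos φ ≠ 0) :
    odeOp m (fun x => cos x ^ n * sin x) φ =
      (((n : ℝ) - 2 * m - 1) * (n - 2 * m - 2) * (1 / cos φ) ^ 2
        - (n - 2 * m + 1) * (n - 2 * m - 1)) * cos φ ^ n * sin φ := by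
  have hnear : ∀ᶠ x in 𝓝 φ, cos x ≠ 0 := continuous_cos.continuousAt.eventually_ne hφ
  have hpow := hasDerivAt_cos_pow n hφ
  have hpow' := ((hpow.const_mul (n : ℝ)).fun_mul (hasDerivAt_tan hφ)).fun_neg
  rw [odeOp_of_hasDerivAt
    (hnear.mono fun x hx => (hasDerivAt_cos_pow n hx).fun_mul (hasDerivAt_sin x))
    ((hpow'.fun_mul (hasDerivAt_sin φ)).add (hpow.fun_mul (hasDerivAt_cos φ))),
    odeCoeff, tan_eq_sin_div_cos]
  field_simp
  linear_combination sin φ * n * (n - 2 - 4 * m) * sin_sq_add_cos_sq φ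

lemma sum_aSeq_mul_odeOp_cos_pow (hφ : cos φ ≠ 0) :
    ∑ j ∈ Finset.range (m + 1), aSeq m j * odeOp m (fun x => cos x ^ (2 * j)) φ
      = (2 * (m : ℝ) + 1) * (2 * (m : ℝ) + 2) * (1 / cos φ) ^ 2 := by
  set t : ℕ → ℝ := fun j =>
    aSeq m j * ((2 * j - 2 * m - 1) * (2 * j - 2 * m - 2)) * cos φ ^ (2 * j) * (1 / cos φ) ^ 2
  have htel : ∀ j ∈ Finset.range (m + 1),
      aSeq m j * odeOp m (fun x => cos x ^ (2 * j)) φ = t j - t (j + 1) := by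
    intro j _
    rw [odeOp_cos_pow _ hφ]
    simp only [t]
    field_simp
    push_cast
    linear_combination -2 * ((j : ℝ) - m) * cos φ ^ 2 * cos φ ^ (2 * j) * aSeq_succ m j
  rw [Finset.sum_congr rfl htel, Finset.sum_range_sub']
  simp only [t, show aSeq m 0 = 1 from rfl]
  push_cast
  ring

end odeOp

lemma lam0_eq (m : ℕ) (Λ ulΛ c : ℝ) :
    lam0 m Λ ulΛ c = fun x => ulΛ / (2 * (m : ℝ) + 2)
      + (Λ / (2 * (m : ℝ) + 1) - ulΛ / (2 * (m : ℝ) + 2)) *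
          ((∑ j ∈ Finset.range (m + 1), aSeq m j * cos x ^ (2 * j))
            + -2 * aSeq m m * cos x ^ (2 * m + 2))
      + c * (cos x ^ (2 * m + 1) * sin x) := by
  funext x
  rw [lam0]
  ring

theorem stmt8_general (m : ℕ) (Λ ulΛ c : ℝ) :
    ∀ φ ∈ Set.Ioo (-(π / 2)) (π / 2),
      deriv (deriv (lam0 m Λ ulΛ c)) φ
        + 2 * (2 * (m : ℝ) + 1) * Real.tan φ * deriv (lam0 m Λ ulΛ c) φ
        + (-(4 * (m : ℝ) * ((m : ℝ) + 1))
            + 2 * ((m : ℝ) + 1) * (2 * (m : ℝ) + 1) * (1 / Real.cos φ) ^ 2)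
          * lam0 m Λ ulΛ c φ
        = 2 * ((m : ℝ) + 1) * Λ * (1 / Real.cos φ) ^ 2 - 2 * (m : ℝ) * ulΛ := by
  intro φ hφ
  have hcos : cos φ ≠ 0 := (cos_pos_of_mem_Ioo hφ).ne'
  change odeOp m (lam0 m Λ ulΛ c) φ = _
  rw [lam0_eq, odeOp_add, odeOp_add, odeOp_const, odeOp_const_mul, odeOp_add, odeOp_sum]
  · simp only [odeOp_const_mul]
    rw [sum_aSeq_mul_odeOp_cos_pow hcos, odeOp_cos_pow _ hcos, odeOp_cos_pow_mul_sin _ hcos,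
      odeCoeff]
    field_simp
    push_cast
    ring
  all_goals fun_prop

/-- `λ₀` satisfies the second-order linear ODE
`λ₀'' + 2(2m+1) tan φ λ₀' + (−4m(m+1) + 2(m+1)(2m+1) sec²φ) λ₀ = 2(m+1)Λ sec²φ − 2m ulΛ`
on `(-π/2, π/2)`. -/
theorem stmt8 (m : ℕ) (hm : 2 ≤ m) (Λ ulΛ c : ℝ) :
    ∀ φ ∈ Set.Ioo (-(π / 2)) (π / 2),
      deriv (deriv (lam0 m Λ ulΛ c)) φ
        + 2 * (2 * (m : ℝ) + 1) * Real.tan φ * deriv (lam0 m Λ ulΛ c) φ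
        + (-(4 * (m : ℝ) * ((m : ℝ) + 1))
            + 2 * ((m : ℝ) + 1) * (2 * (m : ℝ) + 1) * (1 / Real.cos φ) ^ 2)
          * lam0 m Λ ulΛ c φ
        = 2 * ((m : ℝ) + 1) * Λ * (1 / Real.cos φ) ^ 2 - 2 * (m : ℝ) * ulΛ :=
  stmt8_general m Λ ulΛ c
end

section
/- The function λ₀ of Theorem 1.2 is constant on (-π/2, π/2) if and only if (2m+2)Λ = (2m+1)ulΛ and c = 0; in that case λ₀ ≡ ulΛ/(2m+2). -/
open Real

lemma aSeq_pos (m : ℕ) : ∀ j ≤ m, 0 < aSeq m j := by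
  intro j hj
  induction j with
  | zero => norm_num [aSeq]
  | succ k ih =>
    have hk : k ≤ m := Nat.le_of_succ_le hj
    have h1 : (k : ℝ) + 1 ≤ (m : ℝ) := by exact_mod_cast hj
    have hd : 0 < 2 * (m : ℝ) - 2 * ((k : ℝ) + 1) + 1 := by linarith
    have hn : 0 < 2 * (m : ℝ) - 2 * ((k : ℝ) + 1) + 4 := by linarith
    exact mul_pos (div_pos hn hd) (ih hk)

/-- `λ₀` is constant on `(-π/2, π/2)` iff `(2m+2)Λ = (2m+1)ulΛ` and `c = 0`;
in that case `λ₀ ≡ ulΛ/(2m+2)`. -/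
theorem stmt11 (m : ℕ) (hm : 2 ≤ m) (Λ ulΛ c : ℝ) :
    ((∀ φ ∈ Set.Ioo (-(π / 2)) (π / 2), ∀ φ' ∈ Set.Ioo (-(π / 2)) (π / 2),
        lam0 m Λ ulΛ c φ = lam0 m Λ ulΛ c φ')
      ↔ ((2 * (m : ℝ) + 2) * Λ = (2 * (m : ℝ) + 1) * ulΛ ∧ c = 0))
    ∧ (((2 * (m : ℝ) + 2) * Λ = (2 * (m : ℝ) + 1) * ulΛ ∧ c = 0) →
        ∀ φ ∈ Set.Ioo (-(π / 2)) (π / 2),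
          lam0 m Λ ulΛ c φ = ulΛ / (2 * (m : ℝ) + 2)) := by
  have hpi := pi_pos
  have hm1 : (0:ℝ) < 2 * (m : ℝ) + 1 := by positivity
  have hm2 : (0:ℝ) < 2 * (m : ℝ) + 2 := by positivity
  have hKiff : Λ / (2 * (m : ℝ) + 1) - ulΛ / (2 * (m : ℝ) + 2) = 0
      ↔ (2 * (m : ℝ) + 2) * Λ = (2 * (m : ℝ) + 1) * ulΛ := by
    rw [sub_eq_zero, div_eq_div_iff hm1.ne' hm2.ne']
    constructor <;> intro h <;> linarith
  have hconst : ((2 * (m : ℝ) + 2) * Λ = (2 * (m : ℝ) + 1) * ulΛ ∧ c = 0) →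
      ∀ φ ∈ Set.Ioo (-(π / 2)) (π / 2),
        lam0 m Λ ulΛ c φ = ulΛ / (2 * (m : ℝ) + 2) := by
    rintro ⟨h1, h2⟩ φ _
    simp only [lam0, h2, hKiff.2 h1, zero_mul, add_zero, mul_zero]
  refine ⟨⟨?_, ?_⟩, hconst⟩
  · intro h
    -- first show c = 0
    have hmem4 : (π/4) ∈ Set.Ioo (-(π/2)) (π/2) := ⟨by linarith, by linarith⟩
    have hmem4' : (-(π/4)) ∈ Set.Ioo (-(π/2)) (π/2) := ⟨by linarith, by linarith⟩
    have h1 := h (π/4) hmem4 (-(π/4)) hmem4'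
    have hcos : 0 < Real.cos (π/4) :=
      Real.cos_pos_of_mem_Ioo ⟨by linarith, by linarith⟩
    have hsin : 0 < Real.sin (π/4) :=
      Real.sin_pos_of_pos_of_lt_pi (by linarith) (by linarith)
    simp only [lam0, Real.cos_neg, Real.sin_neg] at h1
    have hX : 0 < Real.cos (π/4) ^ (2*m+1) * Real.sin (π/4) := mul_pos (pow_pos hcos _) hsin
    have hc : c = 0 := by
      have h2 : c * (Real.cos (π/4) ^ (2*m+1) * Real.sin (π/4)) = 0 := by
        linear_combination h1 / 2
      rcases mul_eq_zero.1 h2 with h' | h'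
      · exact h'
      · exact absurd h' (ne_of_gt hX)
    refine ⟨?_, hc⟩
    subst hc
    by_contra hne
    have hK : Λ / (2 * (m : ℝ) + 1) - ulΛ / (2 * (m : ℝ) + 2) ≠ 0 :=
      fun h' => hne (hKiff.1 h')
    -- value at any φ equals value at 0
    have hval : ∀ φ ∈ Set.Ioo (-(π/2)) (π/2),
        (∑ j ∈ Finset.range (m + 1), aSeq m j * Real.cos φ ^ (2 * j))
          - 2 * aSeq m m * Real.cos φ ^ (2 * m + 2)
        = (∑ j ∈ Finset.range (m + 1), aSeq m j) - 2 * aSeq m m := by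
      intro φ hφ
      have h0 : (0:ℝ) ∈ Set.Ioo (-(π/2)) (π/2) := ⟨by linarith, by linarith⟩
      have hh := h φ hφ 0 h0
      simp only [lam0, Real.cos_zero, Real.sin_zero, one_pow, mul_one, mul_zero,
        zero_mul, add_zero] at hh
      have hmul : (Λ / (2 * (m : ℝ) + 1) - ulΛ / (2 * (m : ℝ) + 2)) *
          ((∑ j ∈ Finset.range (m + 1), aSeq m j * Real.cos φ ^ (2 * j))
            - 2 * aSeq m m * Real.cos φ ^ (2 * m + 2))
          = (Λ / (2 * (m : ℝ) + 1) - ulΛ / (2 * (m : ℝ) + 2)) *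
            ((∑ j ∈ Finset.range (m + 1), aSeq m j) - 2 * aSeq m m) := by
        linear_combination hh
      exact mul_left_cancel₀ hK hmul
    -- the polynomial having infinitely many roots
    set p : Polynomial ℝ :=
      (∑ j ∈ Finset.range (m + 1), Polynomial.C (aSeq m j) * Polynomial.X ^ (2 * j))
        - Polynomial.C (2 * aSeq m m) * Polynomial.X ^ (2 * m + 2)
        - Polynomial.C ((∑ j ∈ Finset.range (m + 1), aSeq m j) - 2 * aSeq m m) with hp
    have hpev : ∀ x : ℝ, p.eval x =
        (∑ j ∈ Finset.range (m + 1), aSeq m j * x ^ (2 * j))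
          - 2 * aSeq m m * x ^ (2 * m + 2)
          - ((∑ j ∈ Finset.range (m + 1), aSeq m j) - 2 * aSeq m m) := by
      intro x
      simp [hp, Polynomial.eval_finset_sum]
    have hsub : Real.cos '' (Set.Ioo 0 (π/2)) ⊆ {x : ℝ | p.IsRoot x} := by
      rintro x ⟨φ, hφ, rfl⟩
      have hφ' : φ ∈ Set.Ioo (-(π/2)) (π/2) := ⟨by linarith [hφ.1], hφ.2⟩
      have := hval φ hφ'
      simp only [Set.mem_setOf_eq, Polynomial.IsRoot, hpev]
      linarith
    have hinj : Set.InjOn Real.cos (Set.Ioo 0 (π/2)) :=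
      Real.injOn_cos.mono (fun x hx => Set.mem_Icc.2 ⟨hx.1.le, by linarith [hx.2]⟩)
    have hinf : {x : ℝ | p.IsRoot x}.Infinite :=
      Set.Infinite.mono hsub ((Set.Ioo_infinite (by linarith : (0:ℝ) < π/2)).image hinj)
    have hp0 : p = 0 := Polynomial.eq_zero_of_infinite_isRoot p hinf
    have hco : p.coeff (2 * m + 2) = -(2 * aSeq m m) := by
      simp only [hp, Polynomial.coeff_sub, Polynomial.finset_sum_coeff,
        Polynomial.coeff_C_mul, Polynomial.coeff_X_pow, Polynomial.coeff_C]
      have h22 : ¬(2 * m + 2 = 0) := by omega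
      rw [Finset.sum_eq_zero (fun j hj => by
        have := Finset.mem_range.1 hj
        rw [if_neg (by omega), mul_zero])]
      simp [h22]
    rw [hp0, Polynomial.coeff_zero] at hco
    have := aSeq_pos m m le_rfl
    linarith
  · rintro ⟨h1, h2⟩ φ hφ φ' hφ'
    rw [hconst ⟨h1, h2⟩ φ hφ, hconst ⟨h1, h2⟩ φ' hφ']
end
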